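/- arXiv:1707.07318 — 3 statements merged into one kernel-verified Lean document; each statement's English description precedes it below -/
import Mathlib

section
/- For all natural numbers p and q with 1 ≤ p, 1 ≤ q and p ≠ q, if ω₁(p, q) = 1 then ω₁(q, p ^^^ q) = 1 and ω₁(p ^^^ q, p) = 1 (the quaternion property for the twist of the doubling product P₁). -/
/-- Twist of the Cayley–Dickson doubling product `P₁ : (a,b)(c,d) = (ca − db*, a*d + cb)`. -/
def omega1 (p q : ℕ) : ℤ :=
  if p = 0 ∧ q = 0 then 1
  else if p % 2 = 0 then
    if q % 2 = 0 then omega1 (q / 2) (p / 2)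
    else if 0 < p / 2 then -omega1 (p / 2) (q / 2) else 1
  else
    if q % 2 = 0 then omega1 (q / 2) (p / 2)
    else if 0 < p / 2 then omega1 (q / 2) (p / 2) else -1
termination_by p + q
decreasing_by all_goals omega

/-!
For distinct nonzero `p`, `q` the twist is anticommutative, `ω₁(q, p) = -ω₁(p, q)`, and invariant
under the rotation `(p, q) ↦ (q, p ^^^ q)` of the triple `(p, q, p ^^^ q)`. Both follow by strong
induction on `p + q` along the defining recursion, which halves both arguments; since
`(a ^^^ b) / 2 = a / 2 ^^^ b / 2`, the rotation commutes with halving. Rotating twice carries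
`(p, q)` to `(q, p ^^^ q)` and then to `(p ^^^ q, p)`.
-/

namespace Nat

theorem xor_le_add (a b : ℕ) : a ^^^ b ≤ a + b := by
  rcases eq_zero_or_pos (a + b) with h | h
  · obtain ⟨rfl, rfl⟩ : a = 0 ∧ b = 0 := by omega
    rfl
  have := xor_le_add (a / 2) (b / 2)
  have := div_add_mod (a ^^^ b) 2
  rw [xor_div_two, xor_mod_two_eq] at this
  omega
termination_by a + b

theorem two_mul_xor_two_mul (a b : ℕ) : (2 * a) ^^^ (2 * b) = 2 * (a ^^^ b) := by
  simpa [bit] using xor_bit false a false b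

theorem two_mul_xor_two_mul_add_one (a b : ℕ) : (2 * a) ^^^ (2 * b + 1) = 2 * (a ^^^ b) + 1 := by
  simpa [bit] using xor_bit false a true b

theorem two_mul_add_one_xor_two_mul (a b : ℕ) : (2 * a + 1) ^^^ (2 * b) = 2 * (a ^^^ b) + 1 := by
  simpa [bit] using xor_bit true a false b

theorem two_mul_add_one_xor_two_mul_add_one (a b : ℕ) :
    (2 * a + 1) ^^^ (2 * b + 1) = 2 * (a ^^^ b) := by
  simpa [bit] using xor_bit true a true b

end Nat

theorem omega1_even_even {a b : ℕ} (h : a ≠ 0 ∨ b ≠ 0) :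
    omega1 (2 * a) (2 * b) = omega1 b a := by
  rw [omega1, if_neg (by omega)]
  simp

theorem omega1_even_odd {a : ℕ} (ha : a ≠ 0) (b : ℕ) :
    omega1 (2 * a) (2 * b + 1) = -omega1 a b := by
  have hb : (2 * b + 1) / 2 = b := by omega
  rw [omega1]
  simp [Nat.add_mod, hb, ha]

theorem omega1_zero_odd (b : ℕ) : omega1 0 (2 * b + 1) = 1 := by
  rw [omega1]
  simp [Nat.add_mod]

theorem omega1_odd_even (a b : ℕ) : omega1 (2 * a + 1) (2 * b) = omega1 b a := by
  have ha : (2 * a + 1) / 2 = a := by omega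
  rw [omega1]
  simp [Nat.add_mod, ha]

theorem omega1_odd_odd {a : ℕ} (ha : a ≠ 0) (b : ℕ) :
    omega1 (2 * a + 1) (2 * b + 1) = omega1 b a := by
  have ha' : (2 * a + 1) / 2 = a := by omega
  have hb : (2 * b + 1) / 2 = b := by omega
  rw [omega1]
  simp [Nat.add_mod, ha', hb, ha]

theorem omega1_one_odd (b : ℕ) : omega1 1 (2 * b + 1) = -1 := by
  rw [omega1]
  simp [Nat.add_mod]

theorem omega1_zero_zero : omega1 0 0 = 1 := by
  rw [omega1]
  simp

theorem omega1_zero_right_eq (a : ℕ) : omega1 a 0 = omega1 0 (a / 2) := by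
  obtain ⟨b, rfl | rfl⟩ := Nat.even_or_odd' a
  · rcases eq_or_ne b 0 with rfl | hb
    · rfl
    · simpa using omega1_even_even (b := 0) (Or.inl hb)
  · simpa [Nat.add_div] using omega1_odd_even b 0

theorem omega1_zero_left (a : ℕ) : omega1 0 a = 1 := by
  obtain ⟨b, rfl | rfl⟩ := Nat.even_or_odd' a
  · rcases eq_or_ne b 0 with rfl | hb
    · exact omega1_zero_zero
    · have := omega1_zero_left (b / 2)
      simpa [omega1_zero_right_eq, this] using omega1_even_even (a := 0) (Or.inr hb)
  · exact omega1_zero_odd b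
termination_by a
decreasing_by omega

theorem omega1_zero_right (a : ℕ) : omega1 a 0 = 1 := by
  rw [omega1_zero_right_eq, omega1_zero_left]

theorem omega1_self {a : ℕ} (ha : a ≠ 0) : omega1 a a = -1 := by
  obtain ⟨b, rfl | rfl⟩ := Nat.even_or_odd' a
  · rw [omega1_even_even (Or.inl (by omega)), omega1_self (by omega : b ≠ 0)]
  · rcases eq_or_ne b 0 with rfl | hb
    · exact omega1_one_odd 0
    · rw [omega1_odd_odd hb, omega1_self hb]
termination_by a
decreasing_by all_goals omega

theorem omega1_swap {p q : ℕ} (hp : p ≠ 0) (hq : q ≠ 0) (hpq : p ≠ q) :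
    omega1 q p = -omega1 p q := by
  obtain ⟨a, rfl | rfl⟩ := Nat.even_or_odd' p <;> obtain ⟨b, rfl | rfl⟩ := Nat.even_or_odd' q
  · rw [omega1_even_even (Or.inl (by omega)), omega1_even_even (Or.inl (by omega)),
      omega1_swap (q := b) (by omega) (by omega) (by omega), neg_neg]
  · rw [omega1_odd_even, omega1_even_odd (by omega), neg_neg]
  · rw [omega1_even_odd (by omega), omega1_odd_even]
  · rcases eq_or_ne a 0 with rfl | ha
    · rw [omega1_odd_odd (by omega), omega1_zero_left, omega1_one_odd, neg_neg]
    rcases eq_or_ne b 0 with rfl | hb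
    · rw [omega1_odd_odd ha, omega1_zero_left, omega1_one_odd]
    rw [omega1_odd_odd ha, omega1_odd_odd hb, omega1_swap hb ha (by omega)]
termination_by p + q
decreasing_by all_goals omega

theorem omega1_rotate {p q : ℕ} (hp : p ≠ 0) (hq : q ≠ 0) (hpq : p ≠ q) :
    omega1 q (p ^^^ q) = omega1 p q := by
  obtain ⟨a, rfl | rfl⟩ := Nat.even_or_odd' p <;> obtain ⟨b, rfl | rfl⟩ := Nat.even_or_odd' q
  · have ha : a ≠ 0 := by omega
    have hb : b ≠ 0 := by omega
    have hab : a ≠ b := by omega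
    have hx : a ^^^ b ≠ 0 := Nat.xor_ne_zero_iff.2 hab
    have hax : a ≠ a ^^^ b := fun h => hb (xor_left_eq_self_iff.1 h.symm)
    have := Nat.xor_le_add a b -- bounds the measure of the call at `(a, a ^^^ b)`
    rw [Nat.two_mul_xor_two_mul, omega1_even_even (Or.inl hb), omega1_even_even (Or.inl ha)]
    calc omega1 (a ^^^ b) b = omega1 (a ^^^ b) (a ^^^ (a ^^^ b)) := by rw [xor_cancel_left]
      _ = omega1 a (a ^^^ b) := omega1_rotate ha hx hax
      _ = omega1 b a := by rw [Nat.xor_comm]; exact omega1_rotate hb ha (Ne.symm hab)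
  · have ha : a ≠ 0 := by omega
    rw [Nat.two_mul_xor_two_mul_add_one, omega1_even_odd ha]
    rcases eq_or_ne b 0 with rfl | hb
    · rw [Nat.xor_zero, Nat.mul_zero, Nat.zero_add, omega1_one_odd, omega1_zero_right]
    rw [omega1_odd_odd hb]
    rcases eq_or_ne a b with rfl | hab
    · rw [Nat.xor_self, omega1_zero_left, omega1_self ha, neg_neg]
    have hbx : b ≠ a ^^^ b := fun h => ha (xor_right_eq_self_iff.1 h.symm)
    rw [omega1_swap hb (Nat.xor_ne_zero_iff.2 hab) hbx, omega1_rotate ha hb hab]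
  · have hb : b ≠ 0 := by omega
    rw [Nat.two_mul_add_one_xor_two_mul, omega1_even_odd hb, omega1_odd_even]
    rcases eq_or_ne a 0 with rfl | ha
    · rw [Nat.zero_xor, omega1_self hb, omega1_zero_right, neg_neg]
    rcases eq_or_ne a b with rfl | hab
    · rw [Nat.xor_self, omega1_zero_right, omega1_self hb]
    rw [omega1_rotate ha hb hab, omega1_swap ha hb hab]
  · have hab : a ≠ b := by omega
    rw [Nat.two_mul_add_one_xor_two_mul_add_one, omega1_odd_even]
    rcases eq_or_ne a 0 with rfl | ha
    · rw [Nat.zero_xor, omega1_self (Ne.symm hab), omega1_one_odd]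
    rw [omega1_odd_odd ha]
    rcases eq_or_ne b 0 with rfl | hb
    · rw [Nat.xor_zero, omega1_zero_right, omega1_zero_left]
    -- the odd–odd case reduces to the even–even one
    have := omega1_rotate (p := 2 * a) (q := 2 * b) (by omega) (by omega) (by omega)
    rwa [Nat.two_mul_xor_two_mul, omega1_even_even (Or.inl hb), omega1_even_even (Or.inl ha)]
      at this
termination_by p + q
decreasing_by all_goals omega

/-- The quaternion property for the twist of the doubling product P1. -/
theorem omega1_quaternion_property (p q : ℕ) (hp : 1 ≤ p) (hq : 1 ≤ q) (hpq : p ≠ q)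
    (h : omega1 p q = 1) :
    omega1 q (p ^^^ q) = 1 ∧ omega1 (p ^^^ q) p = 1 := by
  have hp0 : p ≠ 0 := by omega
  have hq0 : q ≠ 0 := by omega
  have hqx : q ≠ p ^^^ q := fun e => hp0 (xor_right_eq_self_iff.1 e.symm)
  have hrot₁ : omega1 q (p ^^^ q) = omega1 p q := omega1_rotate hp0 hq0 hpq
  have hrot₂ : omega1 (p ^^^ q) p = omega1 q (p ^^^ q) := by
    simpa [Nat.xor_comm q] using omega1_rotate hq0 (Nat.xor_ne_zero_iff.2 hpq) hqx
  exact ⟨hrot₁.trans h, hrot₂.trans (hrot₁.trans h)⟩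
end

section
/- Recursive generation of triples for P₂: for all natural numbers p, q with 1 ≤ p, 1 ≤ q, p ≠ q, if ω₂(p, q) = 1 and r = p ^^^ q, then ω₂(2p, 2q) = 1, ω₂(2p, 2q+1) = 1, ω₂(2p+1, 2q) = 1 and ω₂(2p+1, 2q+1) = 1; that is, the triple (p,q,r) generates the triples (2p,2q,2r), (2p,2q+1,2r+1), (2p+1,2q,2r+1) and (2p+1,2q+1,2r). -/
/-- Twist of the Cayley–Dickson doubling product `P₂ : (a,b)(c,d) = (ac − b*d, da* + bc)`. -/
def omega2 (p q : ℕ) : ℤ :=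
  if p = 0 ∧ q = 0 then 1
  else if p % 2 = 0 then
    if q % 2 = 0 then omega2 (p / 2) (q / 2)
    else if 0 < p / 2 then -omega2 (q / 2) (p / 2) else 1
  else
    if q % 2 = 0 then omega2 (p / 2) (q / 2)
    else if 0 < p / 2 then omega2 (p / 2) (q / 2) else -1
termination_by p + q
decreasing_by all_goals omega

/-!
The doubling rules send an index pair to the pair of halves, swapped only in the
(even, odd) case, where the sign also flips. So `ω₂(2p, 2q)`, `ω₂(2p+1, 2q)` and
`ω₂(2p+1, 2q+1)` equal `ω₂(p, q)`, while `ω₂(2p, 2q+1) = -ω₂(q, p)`, which is `ω₂(p, q)`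
again because distinct imaginary units anticommute: `ω₂(q, p) = -ω₂(p, q)` for distinct
`p, q ≥ 1`, by induction on the binary expansion of `p`.
-/

theorem omega2_two_mul_two_mul (r s : ℕ) : omega2 (2 * r) (2 * s) = omega2 r s := by
  rw [omega2]
  rcases Nat.eq_zero_or_pos r with rfl | hr
  · rcases Nat.eq_zero_or_pos s with rfl | hs
    · simp [omega2]
    · simp [show s ≠ 0 by omega]
  · simp [show r ≠ 0 by omega]

theorem omega2_two_mul_two_mul_add_one {r : ℕ} (s : ℕ) (hr : 0 < r) :
    omega2 (2 * r) (2 * s + 1) = -omega2 s r := by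
  rw [omega2]; simp [Nat.mul_add_div, hr]

theorem omega2_two_mul_add_one_two_mul (r s : ℕ) : omega2 (2 * r + 1) (2 * s) = omega2 r s := by
  rw [omega2]; simp [Nat.mul_add_div]

theorem omega2_two_mul_add_one_two_mul_add_one {r : ℕ} (s : ℕ) (hr : 0 < r) :
    omega2 (2 * r + 1) (2 * s + 1) = omega2 r s := by
  rw [omega2]; simp [Nat.mul_add_div, hr]

theorem omega2_one_two_mul_add_one (s : ℕ) : omega2 1 (2 * s + 1) = -1 := by
  rw [omega2]; simp

theorem omega2_zero_right (p : ℕ) : omega2 p 0 = 1 := by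
  induction p using Nat.evenOddRec with
  | h0 => simp [omega2]
  | h_even r ih => simpa [ih] using omega2_two_mul_two_mul r 0
  | h_odd r ih => simpa [ih] using omega2_two_mul_add_one_two_mul r 0

theorem omega2_swap {p q : ℕ} (hp : 0 < p) (hq : 0 < q) (hpq : p ≠ q) :
    omega2 q p = -omega2 p q := by
  induction p using Nat.evenOddRec generalizing q with
  | h0 => exact absurd hp (lt_irrefl 0)
  | h_even r ih =>
    have hr : 0 < r := by omega
    obtain ⟨s, rfl | rfl⟩ := Nat.even_or_odd' q
    · rw [omega2_two_mul_two_mul, omega2_two_mul_two_mul]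
      exact ih hr (by omega) (by omega)
    · rw [omega2_two_mul_two_mul_add_one _ hr, omega2_two_mul_add_one_two_mul, neg_neg]
  | h_odd r ih =>
    obtain ⟨s, rfl | rfl⟩ := Nat.even_or_odd' q
    · rw [omega2_two_mul_two_mul_add_one _ (by omega), omega2_two_mul_add_one_two_mul]
    · rcases Nat.eq_zero_or_pos r with rfl | hr <;> rcases Nat.eq_zero_or_pos s with rfl | hs
      · omega
      · rw [omega2_two_mul_add_one_two_mul_add_one _ hs, omega2_zero_right,
          omega2_one_two_mul_add_one, neg_neg]
      · rw [omega2_two_mul_add_one_two_mul_add_one _ hr, omega2_one_two_mul_add_one,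
          omega2_zero_right]
      · rw [omega2_two_mul_add_one_two_mul_add_one _ hr,
          omega2_two_mul_add_one_two_mul_add_one _ hs]
        exact ih hr hs (by omega)

theorem omega2_triple_generation_general (p q : ℕ) (hp : 1 ≤ p) (hq : 1 ≤ q) (hpq : p ≠ q)
    (h : omega2 p q = 1) :
    omega2 (2 * p) (2 * q) = 1 ∧
    omega2 (2 * p) (2 * q + 1) = 1 ∧
    omega2 (2 * p + 1) (2 * q) = 1 ∧
    omega2 (2 * p + 1) (2 * q + 1) = 1 := by
  refine ⟨?_, ?_, ?_, ?_⟩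
  · rw [omega2_two_mul_two_mul, h]
  · rw [omega2_two_mul_two_mul_add_one _ hp, omega2_swap hp hq hpq, h, neg_neg]
  · rw [omega2_two_mul_add_one_two_mul, h]
  · rw [omega2_two_mul_add_one_two_mul_add_one _ hp, h]

/-- Recursive generation of structure-constant triples for the doubling product P2. -/
theorem omega2_triple_generation (p q r : ℕ) (hp : 1 ≤ p) (hq : 1 ≤ q) (hpq : p ≠ q)
    (h : omega2 p q = 1) (hr : r = p ^^^ q) :
    omega2 (2 * p) (2 * q) = 1 ∧
    omega2 (2 * p) (2 * q + 1) = 1 ∧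
    omega2 (2 * p + 1) (2 * q) = 1 ∧
    omega2 (2 * p + 1) (2 * q + 1) = 1 :=
  omega2_triple_generation_general p q hp hq hpq h
end

section
/- Recursive generation of triples for P₃: for all natural numbers p, q with 1 ≤ p, 1 ≤ q, p ≠ q, if ω₃(p, q) = 1 and r = p ^^^ q, then ω₃(2p, 2q) = 1, ω₃(2r+1, 2q+1) = 1, ω₃(2r+1, 2q) = 1 and ω₃(2r, 2q+1) = 1; that is, the triple (p,q,r) generates the triples (2p,2q,2r), (2r+1,2q+1,2p), (2r+1,2q,2p+1) and (2r,2q+1,2p+1). -/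
/-- Twist of the Cayley–Dickson doubling product `P₃ : (a,b)(c,d) = (ac − db*, a*d + cb)`. -/
def omega3 (p q : ℕ) : ℤ :=
  if p = 0 ∧ q = 0 then 1
  else if p % 2 = 0 then
    if q % 2 = 0 then omega3 (p / 2) (q / 2)
    else if 0 < p / 2 then -omega3 (p / 2) (q / 2) else 1
  else
    if q % 2 = 0 then omega3 (q / 2) (p / 2)
    else if 0 < p / 2 then omega3 (q / 2) (p / 2) else -1
termination_by p + q
decreasing_by all_goals omega

/-! Unfolding one step of the recursion turns each of the four values into `±ω₃(p, q)` or
`±ω₃(q, r)`, so the theorem reduces to two identities for distinct nonzero `a, b`: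
antisymmetry `ω₃(b, a) = -ω₃(a, b)` and cyclicity `ω₃(b, a ^^^ b) = ω₃(a, b)`. Both follow by
induction on `a`, splitting `a` and `b` by parity; the cases where a halved index vanishes or the
two halves coincide are settled by `ω₃(0, n) = ω₃(n, 0) = 1` and `ω₃(n, n) = -1`. -/

theorem Nat.two_mul_xor_two_mul_s12 (a b : ℕ) : (2 * a) ^^^ (2 * b) = 2 * (a ^^^ b) := by
  simpa [Nat.bit] using Nat.xor_bit false a false b

theorem Nat.two_mul_xor_two_mul_add_one_s12 (a b : ℕ) :
    (2 * a) ^^^ (2 * b + 1) = 2 * (a ^^^ b) + 1 := by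
  simpa [Nat.bit] using Nat.xor_bit false a true b

theorem Nat.two_mul_add_one_xor_two_mul_s12 (a b : ℕ) :
    (2 * a + 1) ^^^ (2 * b) = 2 * (a ^^^ b) + 1 := by
  simpa [Nat.bit] using Nat.xor_bit true a false b

theorem Nat.two_mul_add_one_xor_two_mul_add_one_s12 (a b : ℕ) :
    (2 * a + 1) ^^^ (2 * b + 1) = 2 * (a ^^^ b) := by
  simpa [Nat.bit] using Nat.xor_bit true a true b

theorem omega3_zero_zero : omega3 0 0 = 1 := by
  rw [omega3]; simp

theorem omega3_two_mul_two_mul (a b : ℕ) : omega3 (2 * a) (2 * b) = omega3 a b := by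
  rw [omega3]; split_ifs <;> simp_all [omega3_zero_zero]

theorem omega3_two_mul_two_mul_add_one {a : ℕ} (ha : 0 < a) (b : ℕ) :
    omega3 (2 * a) (2 * b + 1) = -omega3 a b := by
  rw [omega3]; split_ifs <;> simp_all [Nat.mul_add_div]

theorem omega3_zero_two_mul_add_one (b : ℕ) : omega3 0 (2 * b + 1) = 1 := by
  rw [omega3]; split_ifs <;> simp_all

theorem omega3_two_mul_add_one_two_mul (a b : ℕ) : omega3 (2 * a + 1) (2 * b) = omega3 b a := by
  rw [omega3]; split_ifs <;> simp_all [Nat.mul_add_div]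

theorem omega3_two_mul_add_one_two_mul_add_one {a : ℕ} (ha : 0 < a) (b : ℕ) :
    omega3 (2 * a + 1) (2 * b + 1) = omega3 b a := by
  rw [omega3]; split_ifs <;> simp_all [Nat.mul_add_div]

theorem omega3_one_two_mul_add_one (b : ℕ) : omega3 1 (2 * b + 1) = -1 := by
  rw [omega3]; split_ifs <;> simp_all

theorem omega3_zero_left (n : ℕ) : omega3 0 n = 1 := by
  induction n using Nat.strong_induction_on with
  | _ n ih =>
    obtain ⟨k, rfl | rfl⟩ := Nat.even_or_odd' n
    · rcases k.eq_zero_or_pos with rfl | hk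
      · exact omega3_zero_zero
      · rw [← mul_zero 2, omega3_two_mul_two_mul, ih k (by omega)]
    · exact omega3_zero_two_mul_add_one k

theorem omega3_zero_right (n : ℕ) : omega3 n 0 = 1 := by
  induction n using Nat.strong_induction_on with
  | _ n ih =>
    obtain ⟨k, rfl | rfl⟩ := Nat.even_or_odd' n
    · rcases k.eq_zero_or_pos with rfl | hk
      · exact omega3_zero_zero
      · rw [← mul_zero 2, omega3_two_mul_two_mul, ih k (by omega)]
    · rw [← mul_zero 2, omega3_two_mul_add_one_two_mul, omega3_zero_left]

theorem omega3_self {n : ℕ} (hn : 0 < n) : omega3 n n = -1 := by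
  induction n using Nat.strong_induction_on with
  | _ n ih =>
    obtain ⟨k, rfl | rfl⟩ := Nat.even_or_odd' n
    · rw [omega3_two_mul_two_mul, ih k (by omega) (by omega)]
    · rcases k.eq_zero_or_pos with rfl | hk
      · exact omega3_one_two_mul_add_one 0
      · rw [omega3_two_mul_add_one_two_mul_add_one hk, ih k (by omega) hk]

theorem omega3_swap {a b : ℕ} (ha : 0 < a) (hb : 0 < b) (hab : a ≠ b) :
    omega3 b a = -omega3 a b := by
  induction a using Nat.strong_induction_on generalizing b with
  | _ a ih =>
    obtain ⟨a, rfl | rfl⟩ := Nat.even_or_odd' a <;> obtain ⟨b, rfl | rfl⟩ := Nat.even_or_odd' b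
    · rw [omega3_two_mul_two_mul, omega3_two_mul_two_mul,
        ih a (by omega) (by omega) (by omega) (by omega)]
    · rw [omega3_two_mul_add_one_two_mul, omega3_two_mul_two_mul_add_one (by omega), neg_neg]
    · rw [omega3_two_mul_add_one_two_mul, omega3_two_mul_two_mul_add_one (by omega)]
    · rcases a.eq_zero_or_pos with rfl | ha'
      · rw [omega3_two_mul_add_one_two_mul_add_one (by omega), omega3_zero_left,
          omega3_one_two_mul_add_one, neg_neg]
      rcases b.eq_zero_or_pos with rfl | hb'
      · rw [omega3_two_mul_add_one_two_mul_add_one ha', omega3_zero_left,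
          omega3_one_two_mul_add_one]
      rw [omega3_two_mul_add_one_two_mul_add_one ha', omega3_two_mul_add_one_two_mul_add_one hb',
        ih a (by omega) ha' hb' (by omega), neg_neg]

theorem omega3_xor_swap {a b : ℕ} (ha : a ≠ 0) (hb : 0 < b) (hab : a ≠ b) :
    omega3 (a ^^^ b) b = -omega3 b (a ^^^ b) :=
  omega3_swap hb (Nat.pos_of_ne_zero (by simpa using hab)) (by simpa using ha : a ^^^ b ≠ b).symm

theorem omega3_cyclic {a b : ℕ} (ha : 0 < a) (hb : 0 < b) (hab : a ≠ b) :
    omega3 b (a ^^^ b) = omega3 a b := by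
  induction a using Nat.strong_induction_on generalizing b with
  | _ a ih =>
    obtain ⟨a, rfl | rfl⟩ := Nat.even_or_odd' a <;> obtain ⟨b, rfl | rfl⟩ := Nat.even_or_odd' b
    · rw [Nat.two_mul_xor_two_mul_s12, omega3_two_mul_two_mul, omega3_two_mul_two_mul,
        ih a (by omega) (by omega) (by omega) (by omega)]
    · rw [Nat.two_mul_xor_two_mul_add_one_s12, omega3_two_mul_two_mul_add_one (by omega)]
      rcases b.eq_zero_or_pos with rfl | hb'
      · rw [Nat.xor_zero, omega3_one_two_mul_add_one, omega3_zero_right]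
      rw [omega3_two_mul_add_one_two_mul_add_one hb']
      rcases eq_or_ne a b with rfl | hab'
      · rw [Nat.xor_self, omega3_zero_left, omega3_self hb', neg_neg]
      rw [omega3_xor_swap (by omega) hb' hab', ih a (by omega) (by omega) hb' hab']
    · rw [Nat.two_mul_add_one_xor_two_mul_s12, omega3_two_mul_two_mul_add_one (by omega),
        omega3_two_mul_add_one_two_mul]
      rcases a.eq_zero_or_pos with rfl | ha'
      · rw [Nat.zero_xor, omega3_self (by omega), omega3_zero_right, neg_neg]
      rcases eq_or_ne a b with rfl | hab'
      · rw [Nat.xor_self, omega3_zero_right, omega3_self ha']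
      rw [ih a (by omega) ha' (by omega) hab', omega3_swap ha' (by omega) hab']
    · rw [Nat.two_mul_add_one_xor_two_mul_add_one_s12, omega3_two_mul_add_one_two_mul]
      rcases a.eq_zero_or_pos with rfl | ha'
      · rw [Nat.zero_xor, omega3_self (by omega), omega3_one_two_mul_add_one]
      rw [omega3_two_mul_add_one_two_mul_add_one ha']
      rcases b.eq_zero_or_pos with rfl | hb'
      · rw [Nat.xor_zero, omega3_zero_right, omega3_zero_left]
      have hab' : a ≠ b := by omega
      rw [omega3_xor_swap ha'.ne' hb' hab', ih a (by omega) ha' hb' hab', omega3_swap ha' hb' hab']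

/-- Recursive generation of structure-constant triples for the doubling product P3. -/
theorem omega3_triple_generation (p q r : ℕ) (hp : 1 ≤ p) (hq : 1 ≤ q) (hpq : p ≠ q)
    (h : omega3 p q = 1) (hr : r = p ^^^ q) :
    omega3 (2 * p) (2 * q) = 1 ∧
    omega3 (2 * r + 1) (2 * q + 1) = 1 ∧
    omega3 (2 * r + 1) (2 * q) = 1 ∧
    omega3 (2 * r) (2 * q + 1) = 1 := by
  subst hr
  have hqr : omega3 q (p ^^^ q) = 1 := (omega3_cyclic hp hq hpq).trans h
  have hxor : 0 < p ^^^ q := Nat.pos_of_ne_zero (by simpa using hpq)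
  refine ⟨?_, ?_, ?_, ?_⟩
  · rw [omega3_two_mul_two_mul, h]
  · rw [omega3_two_mul_add_one_two_mul_add_one hxor, hqr]
  · rw [omega3_two_mul_add_one_two_mul, hqr]
  · rw [omega3_two_mul_two_mul_add_one hxor, omega3_xor_swap (by omega) hq hpq, hqr, neg_neg]
end
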